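/- arXiv:2105.06094 — 2 statements merged into one kernel-verified Lean document; each statement's English description precedes it below -/
import Mathlib

section
/- If f : (a,b) → ℝ is λ-convex for some fixed λ ∈ (0,1) and f is continuous on (a,b), then f is convex on (a,b). -/
open Set

/-!
Fix `x, y ∈ D` and let `S ⊆ [0,1]` be the set of parameters `t` at which the chord inequality
`f (t • x + (1 - t) • y) ≤ t * f x + (1 - t) * f y` holds. By continuity `S` is closed, by
`λ`-convexity it is stable under `(s, t) ↦ λ s + (1 - λ) t`, and it contains `0` and `1`. A closed
subset of `ℝ` with this stability has no gaps: if `t ∉ S`, the nearest points `u < t < v` of `S`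
on either side would have the point `λ u + (1 - λ) v ∈ S` strictly between them.
-/

theorem convex_of_isClosed_of_lam_comb_mem {S : Set ℝ} (hS : IsClosed S) {lam : ℝ}
    (hlam0 : 0 < lam) (hlam1 : lam < 1) (hmem : ∀ s ∈ S, ∀ t ∈ S, lam * s + (1 - lam) * t ∈ S) :
    Convex ℝ S := by
  refine convex_iff_ordConnected.mpr ⟨fun x hx y hy t ht => ?_⟩
  by_contra htS
  obtain ⟨u, ⟨huS, hxu, hut⟩, hu_max⟩ := (isCompact_Icc.inter_left hS).exists_isGreatest
    ⟨x, hx, le_rfl, ht.1⟩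
  obtain ⟨v, ⟨hvS, htv, hvy⟩, hv_min⟩ := (isCompact_Icc.inter_left hS).exists_isLeast
    ⟨y, hy, ht.2, le_rfl⟩
  have hut : u < t := lt_of_le_of_ne hut (by rintro rfl; exact htS huS)
  have htv : t < v := lt_of_le_of_ne htv (by rintro rfl; exact htS hvS)
  have hwS := hmem u huS v hvS
  rcases le_or_gt (lam * u + (1 - lam) * v) t with hwt | htw
  · have := hu_max ⟨hwS, by nlinarith, hwt⟩
    nlinarith
  · have := hv_min ⟨hwS, htw.le, by nlinarith⟩
    nlinarith

section

variable {E : Type*} [AddCommGroup E] [Module ℝ E]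

def LambdaConvexOn (lam : ℝ) (D : Set E) (f : E → ℝ) : Prop :=
  ∀ x ∈ D, ∀ y ∈ D, f (lam • x + (1 - lam) • y) ≤ lam * f x + (1 - lam) * f y

variable [TopologicalSpace E] [ContinuousAdd E] [ContinuousSMul ℝ E]

theorem LambdaConvexOn.convexOn {lam : ℝ} {D : Set E} {f : E → ℝ} (hD : Convex ℝ D)
    (hf : LambdaConvexOn lam D f) (hlam0 : 0 < lam) (hlam1 : lam < 1) (hcont : ContinuousOn f D) :
    ConvexOn ℝ D f := by
  refine ⟨hD, fun x hx y hy p q hp hq hpq => ?_⟩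
  obtain rfl : q = 1 - p := by linarith
  let S := {t ∈ Icc (0 : ℝ) 1 | f (t • x + (1 - t) • y) ≤ t * f x + (1 - t) * f y}
  have hline : ∀ t ∈ Icc (0 : ℝ) 1, t • x + (1 - t) • y ∈ D := fun t ht =>
    hD hx hy ht.1 (sub_nonneg.mpr ht.2) (add_sub_cancel t 1)
  have hS_closed : IsClosed S := by
    have hg : ContinuousOn (fun t : ℝ => f (t • x + (1 - t) • y) - (t * f x + (1 - t) * f y))
        (Icc 0 1) :=
      (hcont.comp (by fun_prop) hline).sub (by fun_prop)
    convert hg.preimage_isClosed_of_isClosed isClosed_Icc (isClosed_Iic (a := 0)) using 1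
    ext t
    simp only [S, mem_ofPred_eq, mem_inter_iff, mem_preimage, mem_Iic, sub_nonpos]
  have hS_comb : ∀ s ∈ S, ∀ t ∈ S, lam * s + (1 - lam) * t ∈ S := by
    rintro s ⟨hs, hfs⟩ t ⟨ht, hft⟩
    refine ⟨⟨by nlinarith [hs.1, ht.1], by nlinarith [hs.2, ht.2]⟩, ?_⟩
    calc f ((lam * s + (1 - lam) * t) • x + (1 - (lam * s + (1 - lam) * t)) • y)
        = f (lam • (s • x + (1 - s) • y) + (1 - lam) • (t • x + (1 - t) • y)) := by
          congr 1; module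
      _ ≤ lam * f (s • x + (1 - s) • y) + (1 - lam) * f (t • x + (1 - t) • y) :=
          hf _ (hline s hs) _ (hline t ht)
      _ ≤ lam * (s * f x + (1 - s) * f y) + (1 - lam) * (t * f x + (1 - t) * f y) := by
          gcongr
      _ = (lam * s + (1 - lam) * t) * f x + (1 - (lam * s + (1 - lam) * t)) * f y := by ring
  have h0 : (0 : ℝ) ∈ S := ⟨left_mem_Icc.mpr zero_le_one, by simp⟩
  have h1 : (1 : ℝ) ∈ S := ⟨right_mem_Icc.mpr zero_le_one, by simp⟩
  exact ((convex_of_isClosed_of_lam_comb_mem hS_closed hlam0 hlam1 hS_comb).ordConnected.out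
    h0 h1 ⟨hp, by linarith⟩).2

end

theorem lambda_convex_continuous_implies_convex_general
    (a b : EReal) (lam : ℝ) (hlam0 : 0 < lam) (hlam1 : lam < 1)
    (f : ℝ → ℝ) (D : Set ℝ) (hD : D = {x : ℝ | a < (x : EReal) ∧ (x : EReal) < b})
    (hconv : ∀ x ∈ D, ∀ y ∈ D,
      f (lam * x + (1 - lam) * y) ≤ lam * f x + (1 - lam) * f y)
    (hcont : ContinuousOn f D) :
    ConvexOn ℝ D f := by
  have hDconv : Convex ℝ D := by
    subst hD
    exact (ordConnected_Ioo.preimage_mono EReal.coe_strictMono.monotone).convex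
  exact LambdaConvexOn.convexOn hDconv hconv hlam0 hlam1 hcont

/-- A `λ`-convex function (for a single fixed `λ ∈ (0,1)`) on an interval `(a,b)`
that is continuous on `(a,b)` is convex on `(a,b)`. -/
theorem lambda_convex_continuous_implies_convex
    (a b : EReal) (hab : a < b) (lam : ℝ) (hlam0 : 0 < lam) (hlam1 : lam < 1)
    (f : ℝ → ℝ) (D : Set ℝ) (hD : D = {x : ℝ | a < (x : EReal) ∧ (x : EReal) < b})
    (hconv : ∀ x ∈ D, ∀ y ∈ D,
      f (lam * x + (1 - lam) * y) ≤ lam * f x + (1 - lam) * f y)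
    (hcont : ContinuousOn f D) :
    ConvexOn ℝ D f :=
  lambda_convex_continuous_implies_convex_general a b lam hlam0 hlam1 f D hD hconv hcont
end

section
/- Fix α > 0 and let φ : [0,∞) → [-∞,∞] be such that ψ(x) := φ(e^x) is convex and strictly increasing on [-∞,∞) with ψ(ℝ) ⊆ ℝ. Then for probability densities f, g ∈ L_{μ,α}, FDPD_{φ,α}(g,f) = 0 if and only if f = g μ-almost everywhere. -/
open MeasureTheory ENNReal Set

/-- A probability density in `L_{μ,α}`: nonnegative (being `ℝ≥0∞`-valued), measurable,
integrating to `1`, with finite `(1+α)`-th power integral. -/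
def IsDensity (μ : Measure ℝ) (α : ℝ) (f : ℝ → ℝ≥0∞) : Prop :=
  Measurable f ∧ ∫⁻ x, f x ∂μ = 1 ∧ ∫⁻ x, f x ^ (1 + α) ∂μ < ⊤

/-- The functional density power divergence
`FDPD_{φ,α}(g,f) = φ(∫ f^{α+1}) − (1+1/α) φ(∫ f^α g) + (1/α) φ(∫ g^{α+1})`. -/
noncomputable def FDPD (φ : ℝ≥0∞ → EReal) (α : ℝ) (μ : Measure ℝ)
    (g f : ℝ → ℝ≥0∞) : EReal :=
  φ (∫⁻ x, f x ^ (α + 1) ∂μ)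
    - ((1 + 1 / α : ℝ) : EReal) * φ (∫⁻ x, f x ^ α * g x ∂μ)
    + ((1 / α : ℝ) : EReal) * φ (∫⁻ x, g x ^ (α + 1) ∂μ)

/-- `ψ` is convex on `[-∞,∞)` (in the extended-real sense). -/
def ERealConvexOn (ψ : EReal → EReal) : Prop :=
  ∀ x : EReal, x < ⊤ → ∀ y : EReal, y < ⊤ → ∀ t : ℝ, 0 < t → t < 1 →
    ψ ((t : EReal) * x + ((1 - t : ℝ) : EReal) * y) ≤
      (t : EReal) * ψ x + ((1 - t : ℝ) : EReal) * ψ y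

/-- `FDPD_{φ,α}` is a valid divergence on densities in `L_{μ,α}`: it is nonnegative, and
vanishes exactly when the two densities agree `μ`-a.e. -/
def IsValidDivergence (φ : ℝ≥0∞ → EReal) (α : ℝ) (μ : Measure ℝ) : Prop :=
  ∀ f g : ℝ → ℝ≥0∞, IsDensity μ α f → IsDensity μ α g →
    0 ≤ FDPD φ α μ g f ∧ (FDPD φ α μ g f = 0 ↔ f =ᵐ[μ] g)

/-!
Write `A = ∫ f^(α+1)`, `B = ∫ f^α g`, `C = ∫ g^(α+1)` and `t = α/(α+1)`, so that
`FDPD = (1 + 1/α) (t φ(A) + (1 - t) φ(C) - φ(B))`. Hölder's inequality gives `B ≤ A^t C^(1-t)`,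
and then monotonicity and convexity of `ψ = φ ∘ exp` give
`φ(B) = ψ(log B) ≤ ψ(t log A + (1 - t) log C) ≤ t φ(A) + (1 - t) φ(C)`.
If the divergence vanishes both steps are equalities, and strict monotonicity of `ψ` forces
equality in Hölder. Equality in Hölder means equality in the pointwise weighted AM-GM inequality
behind it, i.e. `f^(α+1)/A = g^(α+1)/C` a.e.; since `f` and `g` both integrate to `1`, `f = g` a.e.
-/

namespace ENNReal

lemma rpow_mul_rpow_le_add {t : ℝ} (ht0 : 0 ≤ t) (ht1 : t ≤ 1) {a b : ℝ≥0∞} (ha : a ≠ ⊤)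
    (hb : b ≠ ⊤) :
    a ^ t * b ^ (1 - t) ≤ ENNReal.ofReal t * a + ENNReal.ofReal (1 - t) * b := by
  have h1t : 0 ≤ 1 - t := by linarith
  rw [← ofReal_toReal ha, ← ofReal_toReal hb, ofReal_rpow_of_nonneg toReal_nonneg ht0,
    ofReal_rpow_of_nonneg toReal_nonneg h1t, ← ofReal_mul (by positivity), ← ofReal_mul ht0,
    ← ofReal_mul h1t, ← ofReal_add (by positivity) (by positivity)]
  exact ofReal_le_ofReal <|
    Real.geom_mean_le_arith_mean2_weighted ht0 h1t toReal_nonneg toReal_nonneg (by ring)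

lemma rpow_mul_rpow_eq_add_iff {t : ℝ} (ht0 : 0 < t) (ht1 : t < 1) {a b : ℝ≥0∞} (ha : a ≠ ⊤)
    (hb : b ≠ ⊤) :
    a ^ t * b ^ (1 - t) = ENNReal.ofReal t * a + ENNReal.ofReal (1 - t) * b ↔ a = b := by
  have h1t : 0 < 1 - t := by linarith
  rw [← toReal_eq_toReal_iff' ha hb, ← Real.geom_mean_eq_arith_mean2_weighted_iff_of_pos ht0 h1t
    toReal_nonneg toReal_nonneg (by ring)]
  conv_lhs =>
    rw [← ofReal_toReal ha, ← ofReal_toReal hb, ofReal_rpow_of_nonneg toReal_nonneg ht0.le,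
      ofReal_rpow_of_nonneg toReal_nonneg h1t.le, ← ofReal_mul (by positivity),
      ← ofReal_mul ht0.le, ← ofReal_mul h1t.le, ← ofReal_add (by positivity) (by positivity)]
  exact ofReal_eq_ofReal_iff (by positivity) (by positivity)

lemma rpow_add_one_rpow_mul_rpow_add_one_rpow {α : ℝ} (hα : 0 ≤ α) (x y : ℝ≥0∞) :
    (x ^ (α + 1)) ^ (α / (α + 1)) * (y ^ (α + 1)) ^ (1 - α / (α + 1)) = x ^ α * y := by
  have hα1 : α + 1 ≠ 0 := by positivity
  rw [← rpow_mul, ← rpow_mul, mul_div_cancel₀ _ hα1, mul_one_sub, mul_div_cancel₀ _ hα1,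
    add_sub_cancel_left, rpow_one]

end ENNReal

section

variable {X : Type*} [MeasurableSpace X] {μ : Measure X}

lemma ae_eq_of_lintegral_rpow_mul_rpow_eq_one {F G : X → ℝ≥0∞} (hF : AEMeasurable F μ)
    (hG : AEMeasurable G μ) (hF1 : ∫⁻ x, F x ∂μ = 1) (hG1 : ∫⁻ x, G x ∂μ = 1) {t : ℝ}
    (ht0 : 0 < t) (ht1 : t < 1) (h : ∫⁻ x, F x ^ t * G x ^ (1 - t) ∂μ = 1) : F =ᵐ[μ] G := by
  have hF_fin := ae_lt_top' hF (by simp [hF1])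
  have hG_fin := ae_lt_top' hG (by simp [hG1])
  have hle : (fun x ↦ F x ^ t * G x ^ (1 - t)) ≤ᵐ[μ]
      fun x ↦ ENNReal.ofReal t * F x + ENNReal.ofReal (1 - t) * G x := by
    filter_upwards [hF_fin, hG_fin] with x hFx hGx
    exact rpow_mul_rpow_le_add ht0.le ht1.le hFx.ne hGx.ne
  have hmean : ∫⁻ x, ENNReal.ofReal t * F x + ENNReal.ofReal (1 - t) * G x ∂μ = 1 := by
    rw [lintegral_add_left' (hF.const_mul _), lintegral_const_mul'' _ hF,
      lintegral_const_mul'' _ hG, hF1, hG1, mul_one, mul_one,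
      ← ofReal_add ht0.le (by linarith), add_sub_cancel, ofReal_one]
  have heq := ae_eq_of_ae_le_of_lintegral_le hle (by simp [h])
    ((hF.const_mul _).add (hG.const_mul _)) (by rw [hmean, h])
  filter_upwards [heq, hF_fin, hG_fin] with x hx hFx hGx
  exact (rpow_mul_rpow_eq_add_iff ht0 ht1 hFx.ne hGx.ne).1 hx

lemma ae_mul_inv_eq_of_lintegral_rpow_mul_rpow_eq {F G : X → ℝ≥0∞} (hF : AEMeasurable F μ)
    (hG : AEMeasurable G μ) (hF0 : ∫⁻ x, F x ∂μ ≠ 0) (hF_top : ∫⁻ x, F x ∂μ ≠ ⊤)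
    (hG0 : ∫⁻ x, G x ∂μ ≠ 0) (hG_top : ∫⁻ x, G x ∂μ ≠ ⊤) {t : ℝ} (ht0 : 0 < t) (ht1 : t < 1)
    (h : ∫⁻ x, F x ^ t * G x ^ (1 - t) ∂μ = (∫⁻ x, F x ∂μ) ^ t * (∫⁻ x, G x ∂μ) ^ (1 - t)) :
    ∀ᵐ x ∂μ, F x * (∫⁻ x, F x ∂μ)⁻¹ = G x * (∫⁻ x, G x ∂μ)⁻¹ := by
  set A := ∫⁻ x, F x ∂μ
  set C := ∫⁻ x, G x ∂μ
  have hD0 : A ^ t * C ^ (1 - t) ≠ 0 := by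
    simp [rpow_eq_zero_iff, hF0, hG0, hF_top, hG_top]
  have hD_top : A ^ t * C ^ (1 - t) ≠ ⊤ :=
    mul_ne_top (rpow_ne_top_of_nonneg ht0.le hF_top) (rpow_ne_top_of_nonneg (by linarith) hG_top)
  have hnorm (H : X → ℝ≥0∞) (hH : AEMeasurable H μ) (h0 : ∫⁻ x, H x ∂μ ≠ 0)
      (h_top : ∫⁻ x, H x ∂μ ≠ ⊤) : ∫⁻ x, H x * (∫⁻ x, H x ∂μ)⁻¹ ∂μ = 1 := by
    rw [lintegral_mul_const'' _ hH, ENNReal.mul_inv_cancel h0 h_top]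
  refine ae_eq_of_lintegral_rpow_mul_rpow_eq_one (hF.mul_const _) (hG.mul_const _)
    (hnorm F hF hF0 hF_top) (hnorm G hG hG0 hG_top) ht0 ht1 ?_
  have hsplit (x : X) : (F x * A⁻¹) ^ t * (G x * C⁻¹) ^ (1 - t)
      = F x ^ t * G x ^ (1 - t) * (A ^ t * C ^ (1 - t))⁻¹ := by
    rw [mul_rpow_of_nonneg _ _ ht0.le, mul_rpow_of_nonneg _ _ (by linarith), inv_rpow, inv_rpow,
      ENNReal.mul_inv (.inl (by simp [rpow_eq_zero_iff, hF0, hF_top]))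
        (.inl (rpow_ne_top_of_nonneg ht0.le hF_top))]
    ring
  have hprod : AEMeasurable (fun x ↦ F x ^ t * G x ^ (1 - t)) μ := by fun_prop
  simp_rw [hsplit]
  rw [lintegral_mul_const'' _ hprod, h, ENNReal.mul_inv_cancel hD0 hD_top]

lemma ae_eq_of_rpow_ae_eq_const_mul {f g : X → ℝ≥0∞} (hg : AEMeasurable g μ)
    (hf1 : ∫⁻ x, f x ∂μ = 1) (hg1 : ∫⁻ x, g x ∂μ = 1) {p : ℝ} (hp : 0 < p) {k : ℝ≥0∞}
    (h : ∀ᵐ x ∂μ, f x ^ p = k * g x ^ p) : f =ᵐ[μ] g := by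
  have hroot : ∀ᵐ x ∂μ, f x = k ^ p⁻¹ * g x := by
    filter_upwards [h] with x hx
    rw [← rpow_rpow_inv hp.ne' (f x), hx, mul_rpow_of_nonneg _ _ (by positivity),
      rpow_rpow_inv hp.ne']
  have hk : k ^ p⁻¹ = 1 := by
    rw [← hf1, lintegral_congr_ae hroot, lintegral_const_mul'' _ hg, hg1, mul_one]
  filter_upwards [hroot] with x hx
  rw [hx, hk, one_mul]

lemma lintegral_rpow_mul_le {α : ℝ} (hα : 0 ≤ α) {f g : X → ℝ≥0∞} (hf : AEMeasurable f μ)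
    (hg : AEMeasurable g μ) :
    ∫⁻ x, f x ^ α * g x ∂μ ≤
      (∫⁻ x, f x ^ (α + 1) ∂μ) ^ (α / (α + 1)) * (∫⁻ x, g x ^ (α + 1) ∂μ) ^ (1 - α / (α + 1)) := by
  have ht1 : α / (α + 1) ≤ 1 := div_le_one_of_le₀ (by linarith) (by positivity)
  simpa only [rpow_add_one_rpow_mul_rpow_add_one_rpow hα] using
    ENNReal.lintegral_mul_norm_pow_le (hf.pow_const (α + 1)) (hg.pow_const (α + 1)) (by positivity)
      (sub_nonneg.2 ht1) (add_sub_cancel _ _)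

end

lemma ERealConvexOn.eq_of_le_of_le_apply {ψ : EReal → EReal} (hconv : ERealConvexOn ψ)
    (hmono : StrictMonoOn ψ (Iio ⊤)) {t : ℝ} (ht0 : 0 < t) (ht1 : t < 1) {a c : ℝ} {b : EReal}
    (hb : b ≤ ((t * a + (1 - t) * c : ℝ) : EReal))
    (h : (t : EReal) * ψ a + ((1 - t : ℝ) : EReal) * ψ c ≤ ψ b) :
    b = ((t * a + (1 - t) * c : ℝ) : EReal) := by
  by_contra hne
  have hlt := lt_of_le_of_ne hb hne
  have hconv_ac := hconv a (EReal.coe_lt_top a) c (EReal.coe_lt_top c) t ht0 ht1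
  push_cast at hconv_ac
  exact (hmono (hlt.trans (EReal.coe_lt_top _)) (EReal.coe_lt_top _) hlt).not_ge
    (hconv_ac.trans h)

lemma EReal.coe_sub_mul_add_mul_eq_zero_iff {α : ℝ} (hα : 0 < α) (a c : ℝ) (y : EReal) :
    (a : EReal) - ((1 + 1 / α : ℝ) : EReal) * y + ((1 / α : ℝ) : EReal) * c = 0 ↔
      y = ((α / (α + 1) * a + (1 - α / (α + 1)) * c : ℝ) : EReal) := by
  have hpos : 0 < 1 + 1 / α := by positivity
  induction y using EReal.rec with
  | bot =>
    rw [EReal.coe_mul_bot_of_pos hpos, EReal.coe_sub_bot, ← EReal.coe_mul, EReal.top_add_coe]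
    exact iff_of_false EReal.top_ne_zero (EReal.bot_ne_coe _)
  | top =>
    rw [EReal.coe_mul_top_of_pos hpos, EReal.sub_top, EReal.bot_add]
    exact iff_of_false EReal.bot_ne_zero (EReal.top_ne_coe _)
  | coe y =>
    norm_cast
    constructor <;> intro h <;> field_simp at h ⊢ <;> linarith

lemma IsDensity.lintegral_rpow_add_one_ne_zero {μ : Measure ℝ} {α : ℝ} {f : ℝ → ℝ≥0∞}
    (hf : IsDensity μ α f) (hα : -1 < α) : ∫⁻ x, f x ^ (α + 1) ∂μ ≠ 0 := by
  intro h0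
  have hf0 : f =ᵐ[μ] 0 := by
    filter_upwards [(lintegral_eq_zero_iff (hf.1.pow_const _)).1 h0] with x hx
    exact (rpow_eq_zero_iff_of_pos (by linarith)).1 hx
  simpa [lintegral_congr_ae hf0] using hf.2.1

lemma IsDensity.lintegral_rpow_add_one_ne_top {μ : Measure ℝ} {α : ℝ} {f : ℝ → ℝ≥0∞}
    (hf : IsDensity μ α f) : ∫⁻ x, f x ^ (α + 1) ∂μ ≠ ⊤ := by
  rw [add_comm]
  exact hf.2.2.ne

lemma IsDensity.ae_eq_of_lintegral_rpow_mul_eq {μ : Measure ℝ} {α : ℝ} (hα : 0 < α)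
    {f g : ℝ → ℝ≥0∞} (hf : IsDensity μ α f) (hg : IsDensity μ α g)
    (h : ∫⁻ x, f x ^ α * g x ∂μ =
      (∫⁻ x, f x ^ (α + 1) ∂μ) ^ (α / (α + 1)) * (∫⁻ x, g x ^ (α + 1) ∂μ) ^ (1 - α / (α + 1))) :
    f =ᵐ[μ] g := by
  have hA0 := hf.lintegral_rpow_add_one_ne_zero (by linarith)
  have hA_top := hf.lintegral_rpow_add_one_ne_top
  have hnormalized := ae_mul_inv_eq_of_lintegral_rpow_mul_rpow_eq (t := α / (α + 1))
    (hf.1.pow_const _).aemeasurable (hg.1.pow_const _).aemeasurable hA0 hA_top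
    (hg.lintegral_rpow_add_one_ne_zero (by linarith)) hg.lintegral_rpow_add_one_ne_top
    (div_pos hα (by linarith))
    ((div_lt_one (by linarith)).2 (by linarith))
    (by simpa only [rpow_add_one_rpow_mul_rpow_add_one_rpow hα.le] using h)
  refine ae_eq_of_rpow_ae_eq_const_mul hg.1.aemeasurable hf.2.1 hg.2.1 (by linarith : 0 < α + 1)
    (k := (∫⁻ x, f x ^ (α + 1) ∂μ) * (∫⁻ x, g x ^ (α + 1) ∂μ)⁻¹) ?_
  filter_upwards [hnormalized] with x hx
  rw [← div_eq_mul_inv, eq_comm, ENNReal.eq_div_iff hA0 hA_top] at hx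
  rw [← hx]
  ring

lemma apply_ne_top_and_ne_bot_of_ne_zero_of_ne_top {φ : ℝ≥0∞ → EReal}
    (hreal : ∀ x : ℝ, φ (EReal.exp x) ≠ ⊤ ∧ φ (EReal.exp x) ≠ ⊥) {A : ℝ≥0∞} (hA0 : A ≠ 0)
    (hA_top : A ≠ ⊤) : φ A ≠ ⊤ ∧ φ A ≠ ⊥ := by
  rw [← exp_log A, log_pos_real hA0 hA_top]
  exact hreal _

lemma eq_rpow_mul_rpow_of_sub_mul_add_mul_eq_zero {φ : ℝ≥0∞ → EReal}
    (hconv : ERealConvexOn (fun x => φ (EReal.exp x)))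
    (hmono : StrictMonoOn (fun x => φ (EReal.exp x)) (Iio ⊤))
    (hreal : ∀ x : ℝ, φ (EReal.exp x) ≠ ⊤ ∧ φ (EReal.exp x) ≠ ⊥) {α : ℝ} (hα : 0 < α)
    {A B C : ℝ≥0∞} (hA0 : A ≠ 0) (hA_top : A ≠ ⊤) (hC0 : C ≠ 0) (hC_top : C ≠ ⊤)
    (hB : B ≤ A ^ (α / (α + 1)) * C ^ (1 - α / (α + 1)))
    (h : φ A - ((1 + 1 / α : ℝ) : EReal) * φ B + ((1 / α : ℝ) : EReal) * φ C = 0) :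
    B = A ^ (α / (α + 1)) * C ^ (1 - α / (α + 1)) := by
  set t := α / (α + 1)
  obtain ⟨a, hlog_A⟩ : ∃ a : ℝ, ENNReal.log A = a := ⟨_, log_pos_real hA0 hA_top⟩
  obtain ⟨c, hlog_C⟩ : ∃ c : ℝ, ENNReal.log C = c := ⟨_, log_pos_real hC0 hC_top⟩
  have hlog_mean : ENNReal.log (A ^ t * C ^ (1 - t)) = ((t * a + (1 - t) * c : ℝ) : EReal) := by
    rw [log_mul_add, log_rpow, log_rpow, hlog_A, hlog_C]
    norm_cast
  obtain ⟨pa, hpa⟩ : ∃ p : ℝ, φ (EReal.exp a) = p :=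
    ⟨_, (EReal.coe_toReal (hreal a).1 (hreal a).2).symm⟩
  obtain ⟨pc, hpc⟩ : ∃ p : ℝ, φ (EReal.exp c) = p :=
    ⟨_, (EReal.coe_toReal (hreal c).1 (hreal c).2).symm⟩
  rw [← exp_log A, ← exp_log B, ← exp_log C, hlog_A, hlog_C, hpa, hpc,
    EReal.coe_sub_mul_add_mul_eq_zero_iff hα] at h
  have hlog_B := hconv.eq_of_le_of_le_apply hmono (div_pos hα (by linarith))
    ((div_lt_one (by linarith)).2 (by linarith)) (hlog_mean ▸ log_monotone hB)
    (by simp only [hpa, hpc, h]; norm_cast)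
  exact log_injective (hlog_B.trans hlog_mean.symm)

lemma FDPD_eq_zero_of_ae_eq {μ : Measure ℝ} {φ : ℝ≥0∞ → EReal} {α : ℝ} (hα : 0 ≤ α)
    {f g : ℝ → ℝ≥0∞} (hfg : f =ᵐ[μ] g)
    (hC : φ (∫⁻ x, g x ^ (α + 1) ∂μ) ≠ ⊤ ∧ φ (∫⁻ x, g x ^ (α + 1) ∂μ) ≠ ⊥) :
    FDPD φ α μ g f = 0 := by
  have hA : ∫⁻ x, f x ^ (α + 1) ∂μ = ∫⁻ x, g x ^ (α + 1) ∂μ :=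
    lintegral_congr_ae (hfg.mono fun x hx ↦ by simp only [hx])
  have hB : ∫⁻ x, f x ^ α * g x ∂μ = ∫⁻ x, g x ^ (α + 1) ∂μ :=
    lintegral_congr_ae <| hfg.mono fun x hx ↦ by
      simp only [hx, rpow_add_of_nonneg _ _ hα zero_le_one, rpow_one]
  rw [FDPD, hA, hB, ← EReal.coe_toReal hC.1 hC.2]
  norm_cast
  ring

/-- under the same conditions on `φ` (namely `ψ(x) = φ(eˣ)` convex and strictly
increasing on `[-∞,∞)` with `ψ(ℝ) ⊆ ℝ`), for densities `f, g ∈ L_{μ,α}` one has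
`FDPD_{φ,α}(g,f) = 0` if and only if `f = g` `μ`-a.e. -/
theorem fdpd_eq_zero_iff_of_psi_convex_strictMono
    (μ : Measure ℝ) (α : ℝ) (hα : 0 < α) (φ : ℝ≥0∞ → EReal)
    (hconv : ERealConvexOn (fun x => φ (EReal.exp x)))
    (hmono : StrictMonoOn (fun x => φ (EReal.exp x)) (Iio (⊤ : EReal)))
    (hreal : ∀ x : ℝ, φ (EReal.exp (x : EReal)) ≠ ⊤ ∧ φ (EReal.exp (x : EReal)) ≠ ⊥)
    (f g : ℝ → ℝ≥0∞) (hf : IsDensity μ α f) (hg : IsDensity μ α g) :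
    FDPD φ α μ g f = 0 ↔ f =ᵐ[μ] g := by
  have hA0 := hf.lintegral_rpow_add_one_ne_zero (by linarith)
  have hC0 := hg.lintegral_rpow_add_one_ne_zero (by linarith)
  have hA_top := hf.lintegral_rpow_add_one_ne_top
  have hC_top := hg.lintegral_rpow_add_one_ne_top
  constructor
  · intro h
    exact hf.ae_eq_of_lintegral_rpow_mul_eq hα hg <|
      eq_rpow_mul_rpow_of_sub_mul_add_mul_eq_zero hconv hmono hreal hα hA0 hA_top hC0 hC_top
        (lintegral_rpow_mul_le hα.le hf.1.aemeasurable hg.1.aemeasurable) h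
  · intro hfg
    exact FDPD_eq_zero_of_ae_eq hα.le hfg
      (apply_ne_top_and_ne_bot_of_ne_zero_of_ne_top hreal hC0 hC_top)
end
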